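/- Let b = (b₁,b₂,b₃,b₄) ∈ ℚ(ω)⁴ with |b| < 1 (where ω = e^{2πi/3}), and let Λ ⊂ ℂ⁵ be the ℤ-lattice spanned by the 10 columns of the 5×10 period matrix P(b) = (A, B), with A, B as in the period-matrix formula: A has first row (1,b), first column (1,b)ᵀ, identity in the lower 4×4 block; B has first row (ω, ω̄b), first column (ω, ω̄b)ᵀ, ωI in the lower block. Then Λ ⊗ ℚ (the ℚ-span of the columns) equals ℚ(ω)·(ℚ-span of columns of A), and there is a ℂ-linear automorphism of ℂ⁵ carrying Λ ⊗ ℚ onto ℚ(ω)⁵; i.e., the corresponding complex torus ℂ⁵/Λ is isogenous to the product of five Fermat elliptic curves. -/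

import Mathlib

/-!
Write the two halves of the period matrix as `A = 1 + N` and `B = ω + ω̄ N`, where `N` is the
border matrix of `b`. For `c = p + qω ∈ ℚ(ω)` the rational combination `p A_j + q B_j` is
`c e_j + c̄ N_j`, so the ℚ-span of the ten columns contains `c + N c̄` for every `c ∈ ℚ(ω)⁵`.
Taking `c = (z, -z̄ b)` gives `(1 - |b|²) z e₀`, and `1 - |b|²` is a nonzero rational; taking
`c = z e_k` then gives `z e_k`. Hence the span is `ℚ(ω)⁵` itself. The ℚ-span of the columns of
`A` and `ωA` is a `ℚ(ω)`-subspace, so it contains `A c` for all `c ∈ ℚ(ω)⁵`; as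
`det A = 1 - Σ bₖ²` is nonzero, the same two choices of `c` show that it is `ℚ(ω)⁵` too, and
the identity map is the required automorphism.
-/

open Complex Finset Matrix

open ComplexConjugate

/-- `ℚ + ℚω`, which is the field `ℚ(ω)` when `ω² + ω + 1 = 0`. -/
noncomputable def ratAdjoin (ω : ℂ) : Submodule ℚ ℂ := Submodule.span ℚ {1, ω}

noncomputable def ratAdjoinPi (ι : Type*) (ω : ℂ) : Submodule ℚ (ι → ℂ) :=
  Submodule.pi Set.univ fun _ => ratAdjoin ω

theorem IsPrimitiveRoot.sq_add_self_add_one {R : Type*} [CommRing R] [IsDomain R] {ω : R}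
    (h : IsPrimitiveRoot ω 3) : ω ^ 2 + ω + 1 = 0 := by
  have h3 := h.geom_sum_eq_zero (by norm_num)
  simp only [Finset.sum_range_succ, Finset.sum_range_zero, pow_zero, pow_one, zero_add] at h3
  linear_combination h3

theorem IsPrimitiveRoot.conj_eq_neg_one_sub {ω : ℂ} (h : IsPrimitiveRoot ω 3) :
    conj ω = -1 - ω := by
  have hinv : ω * ω ^ 2 = 1 := by rw [← pow_succ', h.pow_eq_one]
  rw [← RCLike.inv_eq_conj (h.norm'_eq_one (by norm_num)), inv_eq_of_mul_eq_one_right hinv]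
  linear_combination h.sq_add_self_add_one

section ratAdjoin

variable {ω z w : ℂ}

theorem mem_ratAdjoin : z ∈ ratAdjoin ω ↔ ∃ p q : ℚ, z = p + q * ω := by
  simp only [ratAdjoin, Submodule.mem_span_pair, Rat.smul_def, mul_one, eq_comm]

theorem ratCast_mem_ratAdjoin (r : ℚ) : (r : ℂ) ∈ ratAdjoin ω :=
  mem_ratAdjoin.2 ⟨r, 0, by simp⟩

theorem one_mem_ratAdjoin : (1 : ℂ) ∈ ratAdjoin ω :=
  Submodule.subset_span (by simp)

theorem self_mem_ratAdjoin : ω ∈ ratAdjoin ω :=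
  Submodule.subset_span (by simp)

theorem mul_mem_ratAdjoin (hω : ω ^ 2 + ω + 1 = 0) (hz : z ∈ ratAdjoin ω)
    (hw : w ∈ ratAdjoin ω) : z * w ∈ ratAdjoin ω := by
  obtain ⟨p, q, rfl⟩ := mem_ratAdjoin.1 hz
  obtain ⟨p', q', rfl⟩ := mem_ratAdjoin.1 hw
  exact mem_ratAdjoin.2 ⟨p * p' - q * q', p * q' + q * p' - q * q', by
    push_cast; linear_combination (q : ℂ) * q' * hω⟩

theorem conj_mem_ratAdjoin (hconj : conj ω = -1 - ω) (hz : z ∈ ratAdjoin ω) :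
    conj z ∈ ratAdjoin ω := by
  obtain ⟨p, q, rfl⟩ := mem_ratAdjoin.1 hz
  exact mem_ratAdjoin.2 ⟨p - q, -q, by
    simp only [map_add, map_mul, map_ratCast, hconj]; push_cast; ring⟩

theorem exists_ratCast_eq_normSq (hω : ω ^ 2 + ω + 1 = 0) (hconj : conj ω = -1 - ω)
    (hz : z ∈ ratAdjoin ω) : ∃ r : ℚ, (r : ℝ) = normSq z := by
  obtain ⟨p, q, rfl⟩ := mem_ratAdjoin.1 hz
  refine ⟨p ^ 2 - p * q + q ^ 2, ofReal_injective ?_⟩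
  rw [← mul_conj]
  simp only [map_add, map_mul, map_ratCast, hconj]
  push_cast
  linear_combination (q : ℂ) ^ 2 * hω

theorem inv_mem_ratAdjoin (hω : ω ^ 2 + ω + 1 = 0) (hconj : conj ω = -1 - ω)
    (hz : z ∈ ratAdjoin ω) : z⁻¹ ∈ ratAdjoin ω := by
  obtain ⟨r, hr⟩ := exists_ratCast_eq_normSq hω hconj hz
  rw [Complex.inv_def, ← hr]
  exact_mod_cast mul_mem_ratAdjoin hω (conj_mem_ratAdjoin hconj hz) (ratCast_mem_ratAdjoin r⁻¹)

variable {ι : Type*}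

theorem smul_mem_of_mem_ratAdjoin {W : Submodule ℚ (ι → ℂ)} (hW : ∀ v ∈ W, ω • v ∈ W)
    (hz : z ∈ ratAdjoin ω) {v : ι → ℂ} (hv : v ∈ W) : z • v ∈ W := by
  obtain ⟨p, q, rfl⟩ := mem_ratAdjoin.1 hz
  rw [add_smul, mul_smul, Rat.cast_smul_eq_qsmul, Rat.cast_smul_eq_qsmul]
  exact add_mem (W.smul_mem p hv) (W.smul_mem q (hW v hv))

theorem smul_mem_span_union_image_smul (hω : ω ^ 2 + ω + 1 = 0) (S : Set (ι → ℂ))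
    {v : ι → ℂ} (hv : v ∈ Submodule.span ℚ (S ∪ (fun v => ω • v) '' S)) :
    ω • v ∈ Submodule.span ℚ (S ∪ (fun v => ω • v) '' S) := by
  induction hv using Submodule.span_induction with
  | mem v hv =>
    rcases hv with hv | ⟨u, hu, rfl⟩
    · exact Submodule.subset_span (Or.inr ⟨v, hv, rfl⟩)
    · rw [smul_smul, ← sq, show ω ^ 2 = -1 - ω by linear_combination hω, sub_smul,
        neg_one_smul]
      exact sub_mem (neg_mem (Submodule.subset_span (Or.inl hu)))
        (Submodule.subset_span (Or.inr ⟨u, hu, rfl⟩))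
  | zero => simp
  | add x y _ _ hx hy => rw [smul_add]; exact add_mem hx hy
  | smul c x _ hx => rw [smul_comm]; exact Submodule.smul_mem _ _ hx

theorem coe_ratAdjoinPi :
    (ratAdjoinPi ι ω : Set (ι → ℂ)) = {v | ∀ j, ∃ p q : ℚ, v j = p + q * ω} := by
  ext v
  simp [ratAdjoinPi, mem_ratAdjoin]

theorem single_mem_ratAdjoinPi [DecidableEq ι] (j : ι) (hz : z ∈ ratAdjoin ω) :
    Pi.single j z ∈ ratAdjoinPi ι ω := by
  intro i _
  rcases eq_or_ne i j with rfl | hij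
  · simpa using hz
  · simp [hij]

theorem span_eq_ratAdjoinPi [Finite ι] [DecidableEq ι] {S : Set (ι → ℂ)}
    (hS : S ⊆ ratAdjoinPi ι ω) (h : ∀ j, ∀ z ∈ ratAdjoin ω, Pi.single j z ∈ Submodule.span ℚ S) :
    Submodule.span ℚ S = ratAdjoinPi ι ω := by
  refine le_antisymm (Submodule.span_le.2 hS) ?_
  rw [ratAdjoinPi, ← Submodule.iSup_map_single]
  exact iSup_le fun j => Submodule.map_le_iff_le_comap.2 fun z hz => h j z hz

theorem one_apply_mem_ratAdjoin [DecidableEq ι] (i j : ι) :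
    (1 : Matrix ι ι ℂ) i j ∈ ratAdjoin ω := by
  rw [one_apply]
  split_ifs
  exacts [one_mem_ratAdjoin, zero_mem _]

theorem mulVec_mem_span_union_image_smul [Fintype ι] (hω : ω ^ 2 + ω + 1 = 0)
    (M : Matrix ι ι ℂ) {c : ι → ℂ} (hc : c ∈ ratAdjoinPi ι ω) :
    M *ᵥ c ∈ Submodule.span ℚ (Set.range M.col ∪ (fun v => ω • v) '' Set.range M.col) := by
  rw [mulVec_eq_sum]
  refine Submodule.sum_mem _ fun j _ => ?_
  rw [op_smul_eq_smul]
  exact smul_mem_of_mem_ratAdjoin (fun _ => smul_mem_span_union_image_smul hω _) (hc j trivial)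
    (Submodule.subset_span (Or.inl ⟨j, rfl⟩))

theorem add_mulVec_star_mem_span [Fintype ι] [DecidableEq ι] (N : Matrix ι ι ℂ) {c : ι → ℂ}
    (hc : c ∈ ratAdjoinPi ι ω) :
    c + N *ᵥ star c ∈ Submodule.span ℚ
      (Set.range (1 + N).col ∪ Set.range (ω • 1 + conj ω • N).col) := by
  choose p q hpq using fun j => mem_ratAdjoin.1 (hc j (Set.mem_univ j))
  have hsum : c + N *ᵥ star c =
      ∑ j, (p j • (1 + N).col j + q j • (ω • 1 + conj ω • N).col j) := by
    ext i
    simp only [Pi.add_apply, hpq, mulVec, dotProduct, Pi.star_apply, star_add, star_ratCast,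
      star_mul', RCLike.star_def, mul_add, sum_add_distrib, ← Rat.cast_smul_eq_qsmul ℂ,
      Finset.sum_apply, Pi.smul_apply, col_apply, Matrix.add_apply, Matrix.one_apply, smul_eq_mul,
      mul_ite, mul_one, mul_zero, Matrix.smul_apply, sum_ite_eq, mem_univ, ↓reduceIte]
    simp only [mul_comm (N i _), mul_assoc]
    ring
  rw [hsum]
  exact Submodule.sum_mem _ fun j _ => add_mem
    (Submodule.smul_mem _ _ (Submodule.subset_span (Or.inl ⟨j, rfl⟩)))
    (Submodule.smul_mem _ _ (Submodule.subset_span (Or.inr ⟨j, rfl⟩)))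

end ratAdjoin

section borderMatrix

variable {ω : ℂ} {κ : Type*}

/-- The period matrix is `(1 + borderMatrix b, ω • 1 + conj ω • borderMatrix b)`. -/
def borderMatrix (b : κ → ℂ) : Matrix (Option κ) (Option κ) ℂ
  | none, some j => b j
  | some i, none => b i
  | _, _ => 0

theorem borderMatrix_apply_mem_ratAdjoin {b : κ → ℂ} (hb : ∀ k, b k ∈ ratAdjoin ω)
    (i j : Option κ) : borderMatrix b i j ∈ ratAdjoin ω := by
  rcases i with _ | i <;> rcases j with _ | j <;> simp [borderMatrix, hb, zero_mem]

theorem one_add_borderMatrix_apply_mem_ratAdjoin [DecidableEq κ] {b : κ → ℂ}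
    (hb : ∀ k, b k ∈ ratAdjoin ω) (i j : Option κ) : (1 + borderMatrix b) i j ∈ ratAdjoin ω :=
  add_mem (one_apply_mem_ratAdjoin i j) (borderMatrix_apply_mem_ratAdjoin hb i j)

variable [Fintype κ]

theorem sum_sq_ne_one_of_sum_norm_sq_lt_one {b : κ → ℂ} (hb : ∑ k, ‖b k‖ ^ 2 < 1) :
    ∑ k, b k ^ 2 ≠ 1 := by
  intro h
  have : ‖∑ k, b k ^ 2‖ ≤ ∑ k, ‖b k‖ ^ 2 := (norm_sum_le _ _).trans_eq (by simp [norm_pow])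
  rw [h, norm_one] at this
  linarith

@[simp]
theorem borderMatrix_mulVec_none (b : κ → ℂ) (v : Option κ → ℂ) :
    (borderMatrix b *ᵥ v) none = ∑ k, b k * v (some k) := by
  simp [Matrix.mulVec, dotProduct, Fintype.sum_option, borderMatrix]

@[simp]
theorem borderMatrix_mulVec_some (b : κ → ℂ) (v : Option κ → ℂ) (m : κ) :
    (borderMatrix b *ᵥ v) (some m) = b m * v none := by
  simp [Matrix.mulVec, dotProduct, Fintype.sum_option, borderMatrix]

variable [DecidableEq κ]

theorem borderMatrix_mulVec_single_some (b : κ → ℂ) (k : κ) (z : ℂ) :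
    borderMatrix b *ᵥ Pi.single (some k) z = Pi.single none (b k * z) := by
  ext (_ | m) <;> simp [Pi.single_apply]

theorem add_borderMatrix_mulVec_star (b : κ → ℂ) (z : ℂ) :
    (fun i => i.elim z fun k => -(b k * conj z)) +
        borderMatrix b *ᵥ star (fun i => i.elim z fun k => -(b k * conj z)) =
      ((1 - ∑ k, normSq (b k) : ℝ) : ℂ) • Pi.single none z := by
  ext (_ | m)
  · simp only [Pi.add_apply, Option.elim_none, Option.elim_some, borderMatrix_mulVec_none,
      Pi.star_apply, star_neg, star_mul', RCLike.star_def, conj_conj, mul_neg, ← mul_assoc,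
      mul_conj, sum_neg_distrib, ← sum_mul, ofReal_sub, ofReal_one, ofReal_sum, Pi.smul_apply,
      Pi.single_eq_same, smul_eq_mul]
    ring
  · simp

theorem one_add_borderMatrix_mulVec (b : κ → ℂ) (w : ℂ) :
    (1 + borderMatrix b) *ᵥ (fun i => i.elim w fun k => -(b k * w)) =
      Pi.single none (w * (1 - ∑ k, b k ^ 2)) := by
  ext (_ | m)
  · simp only [add_mulVec, one_mulVec, Pi.add_apply, Option.elim_none, Option.elim_some,
      borderMatrix_mulVec_none, mul_neg, ← mul_assoc, ← sq, sum_neg_distrib, ← sum_mul,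
      Pi.single_eq_same]
    ring
  · simp [add_mulVec]

variable {b : κ → ℂ}

theorem span_periodColumns_eq_ratAdjoinPi (hω : ω ^ 2 + ω + 1 = 0) (hconj : conj ω = -1 - ω)
    (hbF : ∀ k, b k ∈ ratAdjoin ω) (hb : ∑ k, ‖b k‖ ^ 2 < 1) :
    Submodule.span ℚ (Set.range (1 + borderMatrix b).col ∪
      Set.range (ω • 1 + conj ω • borderMatrix b).col) = ratAdjoinPi (Option κ) ω := by
  set W := Submodule.span ℚ (Set.range (1 + borderMatrix b).col ∪
      Set.range (ω • 1 + conj ω • borderMatrix b).col)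
  obtain ⟨r, hr⟩ : ∃ r : ℚ, (r : ℝ) = ∑ k, normSq (b k) := by
    choose r hr using fun k => exists_ratCast_eq_normSq hω hconj (hbF k)
    exact ⟨∑ k, r k, by simp [hr]⟩
  have hr1 : (1 - r : ℚ) ≠ 0 := by
    have : (r : ℝ) < 1 := by simpa [hr, normSq_eq_norm_sq] using hb
    exact sub_ne_zero.2 (by exact_mod_cast this.ne')
  have hnone : ∀ z ∈ ratAdjoin ω, Pi.single none z ∈ W := by
    intro z hz
    have hc : (fun i => i.elim z fun k => -(b k * conj z)) ∈ ratAdjoinPi (Option κ) ω := by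
      rintro (_ | k) -
      exacts [hz, neg_mem (mul_mem_ratAdjoin hω (hbF k) (conj_mem_ratAdjoin hconj hz))]
    have hrC : ((1 - ∑ k, normSq (b k) : ℝ) : ℂ) = ((1 - r : ℚ) : ℂ) := by
      rw [← hr]; push_cast; rfl
    have := add_mulVec_star_mem_span (borderMatrix b) hc
    rwa [add_borderMatrix_mulVec_star, hrC, Rat.cast_smul_eq_qsmul,
      Submodule.smul_mem_iff _ hr1] at this
  have hsome : ∀ k, ∀ z ∈ ratAdjoin ω, Pi.single (some k) z ∈ W := by
    intro k z hz
    have := add_mulVec_star_mem_span (borderMatrix b) (single_mem_ratAdjoinPi (some k) hz)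
    rw [← Pi.single_star, borderMatrix_mulVec_single_some] at this
    simpa only [add_sub_cancel_right] using sub_mem this
      (hnone (b k * star z) (mul_mem_ratAdjoin hω (hbF k) (conj_mem_ratAdjoin hconj hz)))
  refine span_eq_ratAdjoinPi ?_ ?_
  · rintro _ (⟨j, rfl⟩ | ⟨j, rfl⟩) i -
    · exact one_add_borderMatrix_apply_mem_ratAdjoin hbF i j
    · exact add_mem (mul_mem_ratAdjoin hω self_mem_ratAdjoin (one_apply_mem_ratAdjoin i j))
        (mul_mem_ratAdjoin hω (conj_mem_ratAdjoin hconj self_mem_ratAdjoin)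
          (borderMatrix_apply_mem_ratAdjoin hbF i j))
  · rintro (_ | k)
    exacts [hnone, hsome k]

theorem span_columns_union_smul_eq_ratAdjoinPi (hω : ω ^ 2 + ω + 1 = 0)
    (hconj : conj ω = -1 - ω) (hbF : ∀ k, b k ∈ ratAdjoin ω) (hb : ∑ k, b k ^ 2 ≠ 1) :
    Submodule.span ℚ (Set.range (1 + borderMatrix b).col ∪
      (fun v => ω • v) '' Set.range (1 + borderMatrix b).col) = ratAdjoinPi (Option κ) ω := by
  set U := Submodule.span ℚ (Set.range (1 + borderMatrix b).col ∪
      (fun v => ω • v) '' Set.range (1 + borderMatrix b).col)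
  have hnone : ∀ z ∈ ratAdjoin ω, Pi.single none z ∈ U := by
    intro z hz
    have hd : 1 - ∑ k, b k ^ 2 ≠ 0 := sub_ne_zero.2 (Ne.symm hb)
    have hdF : 1 - ∑ k, b k ^ 2 ∈ ratAdjoin ω :=
      sub_mem one_mem_ratAdjoin (Submodule.sum_mem _ fun k _ => sq (b k) ▸
        mul_mem_ratAdjoin hω (hbF k) (hbF k))
    have hw : z * (1 - ∑ k, b k ^ 2)⁻¹ ∈ ratAdjoin ω :=
      mul_mem_ratAdjoin hω hz (inv_mem_ratAdjoin hω hconj hdF)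
    have hc : (fun i => i.elim (z * (1 - ∑ k, b k ^ 2)⁻¹) fun k =>
        -(b k * (z * (1 - ∑ k, b k ^ 2)⁻¹))) ∈ ratAdjoinPi (Option κ) ω := by
      rintro (_ | k) -
      exacts [hw, neg_mem (mul_mem_ratAdjoin hω (hbF k) hw)]
    have := mulVec_mem_span_union_image_smul hω (1 + borderMatrix b) hc
    rwa [one_add_borderMatrix_mulVec, inv_mul_cancel_right₀ hd] at this
  have hsome : ∀ k, ∀ z ∈ ratAdjoin ω, Pi.single (some k) z ∈ U := by
    intro k z hz
    have := mulVec_mem_span_union_image_smul hω (1 + borderMatrix b)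
      (single_mem_ratAdjoinPi (some k) hz)
    rw [add_mulVec, one_mulVec, borderMatrix_mulVec_single_some] at this
    simpa only [add_sub_cancel_right] using
      sub_mem this (hnone _ (mul_mem_ratAdjoin hω (hbF k) hz))
  refine span_eq_ratAdjoinPi ?_ ?_
  · rintro _ (⟨j, rfl⟩ | ⟨_, ⟨j, rfl⟩, rfl⟩) i -
    · exact one_add_borderMatrix_apply_mem_ratAdjoin hbF i j
    · exact mul_mem_ratAdjoin hω self_mem_ratAdjoin
        (one_add_borderMatrix_apply_mem_ratAdjoin hbF i j)
  · rintro (_ | k)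
    exacts [hnone, hsome k]

end borderMatrix

/-- For `b ∈ ℚ(ω)⁴` with `|b| < 1`, the ℚ-span of the 10 columns of the
period matrix `P(b) = (A, B)` is the `ℚ(ω)`-span of the columns of `A`, and
some ℂ-linear automorphism of `ℂ⁵` carries it onto `ℚ(ω)⁵`: the complex torus
`ℂ⁵/Λ` is isogenous to the product of five Fermat elliptic curves. -/
theorem lattice_isogenous_to_fermat
    (ω : ℂ) (hω : ω = Complex.exp (2 * Real.pi * Complex.I / 3))
    (b : Fin 4 → ℂ)
    (hbQ : ∀ i, ∃ p q : ℚ, b i = (p : ℂ) + (q : ℂ) * ω)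
    (hb : ∑ i, ‖b i‖ ^ 2 < 1)
    (A B : Matrix (Option (Fin 4)) (Option (Fin 4)) ℂ)
    (hA : ∀ i j, A i j = match i, j with
      | none, none => 1
      | none, some j => b j
      | some i, none => b i
      | some i, some j => if i = j then 1 else 0)
    (hB : ∀ i j, B i j = match i, j with
      | none, none => ω
      | none, some j => starRingEnd ℂ ω * b j
      | some i, none => starRingEnd ℂ ω * b i
      | some i, some j => if i = j then ω else 0)
    (colsA cols : Set (Option (Fin 4) → ℂ))
    (hcolsA : colsA = Set.range (fun j => fun i => A i j))
    (hcols : cols = Set.range (fun j => fun i => A i j) ∪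
      Set.range (fun j => fun i => B i j)) :
    (Submodule.span ℚ cols : Submodule ℚ (Option (Fin 4) → ℂ)) =
      Submodule.span ℚ (colsA ∪ (fun v => ω • v) '' colsA) ∧
    ∃ T : (Option (Fin 4) → ℂ) ≃ₗ[ℂ] (Option (Fin 4) → ℂ),
      (T : (Option (Fin 4) → ℂ) → (Option (Fin 4) → ℂ)) ''
          ((Submodule.span ℚ cols : Submodule ℚ (Option (Fin 4) → ℂ)) : Set (Option (Fin 4) → ℂ))
        = {v : Option (Fin 4) → ℂ | ∀ j, ∃ p q : ℚ, v j = (p : ℂ) + (q : ℂ) * ω} := by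
  have hprim : IsPrimitiveRoot ω 3 := by
    simpa [hω] using Complex.isPrimitiveRoot_exp 3 (by norm_num)
  have hω3 := hprim.sq_add_self_add_one
  have hconj := hprim.conj_eq_neg_one_sub
  have hbF : ∀ k, b k ∈ ratAdjoin ω := fun k => mem_ratAdjoin.2 (hbQ k)
  obtain rfl : A = 1 + borderMatrix b := by
    ext (_ | i) (_ | j) <;> simp [hA, borderMatrix, one_apply]
  obtain rfl : B = ω • 1 + conj ω • borderMatrix b := by
    ext (_ | i) (_ | j) <;> simp [hB, borderMatrix, one_apply]
  subst hcolsA hcols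
  have hspan := span_periodColumns_eq_ratAdjoinPi hω3 hconj hbF hb
  refine ⟨hspan.trans (span_columns_union_smul_eq_ratAdjoinPi hω3 hconj hbF
      (sum_sq_ne_one_of_sum_norm_sq_lt_one hb)).symm,
    LinearEquiv.refl ℂ _, ?_⟩
  rw [← coe_ratAdjoinPi, ← hspan]
  exact Set.image_id _
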